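/- Let p be a prime with p ≡ 3 (mod 4) and S ⊆ ℤ/pℤ a nonempty subset with f_S(x) = ∏_{a∈S}(x−a). Let |X_S(𝔽_p)| denote the number of affine points (x,y) ∈ (ℤ/pℤ)² with y² = f_S(x). If |S| is even then |X_S(𝔽_p)| ≡ 2 (mod 4), and if |S| is odd then |X_S(𝔽_p)| ≡ 3 (mod 4). -/

import Mathlib

/-!
Write `χ` for the quadratic character and `f = f_S`. Since `y ² = a` has `1 + χ a` solutions, the
number of points is `p + ∑_{x ∉ S} χ (f x)`, a sum of `p - |S|` signs, and a sum of `m` signs is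
`m - 1` plus their product modulo 4. By Wilson's theorem `∏_{x ≠ b} (x - b) = -1`, so
`∏_{x ∉ S} f x` times `D = ∏_{b ≠ c ∈ S} (c - b)` equals `(-1) ^ |S|`. Pairing `(b, c)` with
`(c, b)` gives `χ D = χ (-1) ^ C(|S|, 2)`, hence `∏_{x ∉ S} χ (f x) = χ (-1) ^ C(|S| + 1, 2)`, and
`χ (-1) = -1` because `p ≡ 3 (mod 4)`.
-/

open Finset

theorem Int.sum_modEq_card_sub_one_add_prod {ι : Type*} [DecidableEq ι] (s : Finset ι) (ε : ι → ℤ)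
    (hε : ∀ i ∈ s, ε i = 1 ∨ ε i = -1) :
    ∑ i ∈ s, ε i ≡ #s - 1 + ∏ i ∈ s, ε i [ZMOD 4] := by
  induction s using Finset.induction_on with
  | empty => rfl
  | insert a s ha ih =>
    rw [forall_mem_insert] at hε
    have hprod : ∏ i ∈ s, ε i = 1 ∨ ∏ i ∈ s, ε i = -1 :=
      Int.isUnit_iff.mp (IsUnit.prod_iff.mpr fun i hi => Int.isUnit_iff.mpr (hε.2 i hi))
    have ih := ih hε.2
    rw [sum_insert ha, prod_insert ha, card_insert_of_notMem ha]
    unfold Int.ModEq at ih ⊢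
    generalize ∏ i ∈ s, ε i = π at hprod ih ⊢
    rcases hε.1 with h | h <;> rcases hprod with rfl | rfl <;> rw [h] <;> push_cast <;> omega

theorem Finset.prod_prod_erase_eq_pow_choose_two {α M : Type*} [DecidableEq α] [CommMonoid M]
    (s : Finset α) (g : α → α → M) (u : M) (hg : ∀ a ∈ s, ∀ b ∈ s, a ≠ b → g a b * g b a = u) :
    ∏ a ∈ s, ∏ b ∈ s.erase a, g a b = u ^ (#s).choose 2 := by
  induction s using Finset.induction_on with
  | empty => simp
  | insert a s ha ih =>
    have hs : ∀ x ∈ s, (insert a s).erase x = insert a (s.erase x) := fun x hx =>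
      erase_insert_of_ne fun h => ha (h ▸ hx)
    have hg' := fun x hx y hy => hg x (mem_insert_of_mem hx) y (mem_insert_of_mem hy)
    calc ∏ x ∈ insert a s, ∏ y ∈ (insert a s).erase x, g x y
        = (∏ x ∈ s, g a x) * ∏ x ∈ s, (g x a * ∏ y ∈ s.erase x, g x y) := by
          rw [prod_insert ha, erase_insert ha]
          congr 1
          exact prod_congr rfl fun x hx => by
            rw [hs x hx, prod_insert fun h => ha (mem_of_mem_erase h)]
      _ = (∏ x ∈ s, (g a x * g x a)) * ∏ x ∈ s, ∏ y ∈ s.erase x, g x y := by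
          rw [prod_mul_distrib, prod_mul_distrib, mul_assoc]
      _ = u ^ (#(insert a s)).choose 2 := by
          rw [prod_congr rfl fun x hx => hg a (mem_insert_self a s) x (mem_insert_of_mem hx)
            fun h => ha (h ▸ hx), prod_const, ih hg', ← pow_add, card_insert_of_notMem ha,
            Nat.choose_succ_succ', Nat.choose_one_right]

theorem Int.neg_one_pow_choose_two (m : ℕ) : (-1 : ℤ) ^ m.choose 2 = if m % 4 < 2 then 1 else -1 := by
  induction m using Nat.strong_induction_on with
  | _ m ih =>
    match m, ih with
    | 0, _ | 1, _ | 2, _ | 3, _ => rfl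
    | m + 4, ih =>
      have hm : (m + 4).choose 2 = m.choose 2 + 2 * (2 * m + 3) := by
        simp [Nat.choose_succ_succ']; ring
      rw [hm, pow_add, pow_mul, neg_one_sq, one_pow, mul_one, ih m (by omega), Nat.add_mod_right]

section
variable {F : Type*} [Field F] [Fintype F] [DecidableEq F]

theorem FiniteField.prod_univ_erase_zero : ∏ x ∈ univ.erase (0 : F), x = -1 := by
  rw [prod_subtype (univ.erase 0) (p := (· ≠ 0)) (by simp),
    ← Fintype.prod_equiv unitsEquivNeZero (fun u => (u : F)) _ fun _ => rfl,
    ← Units.coe_prod, FiniteField.prod_univ_units_id_eq_neg_one, Units.val_neg, Units.val_one]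

theorem FiniteField.prod_univ_erase_sub (b : F) : ∏ x ∈ univ.erase b, (x - b) = -1 := by
  rw [← prod_univ_erase_zero]
  exact prod_nbij' (· - b) (· + b) (by simp [sub_eq_zero]) (by simp) (by simp) (by simp) (by simp)

theorem prod_compl_sub_mul_prod_erase_sub {S : Finset F} {b : F} (hb : b ∈ S) :
    (∏ x ∈ Sᶜ, (x - b)) * ∏ c ∈ S.erase b, (c - b) = -1 := by
  have hunion : Sᶜ ∪ S.erase b = univ.erase b := by
    ext x; by_cases hx : x ∈ S <;> simp [hx]; rintro rfl; exact hx hb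
  rw [← prod_union (disjoint_compl_left.mono_right (erase_subset b S)), hunion,
    FiniteField.prod_univ_erase_sub]

theorem prod_compl_prod_sub_mul_prod_prod_erase_sub (S : Finset F) :
    (∏ x ∈ Sᶜ, ∏ b ∈ S, (x - b)) * ∏ b ∈ S, ∏ c ∈ S.erase b, (c - b) = (-1) ^ #S := by
  rw [prod_comm, ← prod_mul_distrib, ← prod_const]
  exact prod_congr rfl fun b hb => prod_compl_sub_mul_prod_erase_sub hb

variable (F) in
theorem card_sq_eq_eq_card_add_sum_quadraticChar (hF : ringChar F ≠ 2) (f : F → F) :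
    (#{P : F × F | P.2 ^ 2 = f P.1} : ℤ) = Fintype.card F + ∑ x, quadraticChar F (f x) := by
  calc (#{P : F × F | P.2 ^ 2 = f P.1} : ℤ) = ∑ x, (#{y : F | y ^ 2 = f x} : ℤ) := by
        rw [card_filter, ← univ_product_univ, sum_product, Nat.cast_sum]
        simp only [card_filter]
    _ = ∑ x, (quadraticChar F (f x) + 1) := sum_congr rfl fun x _ => by
        rw [← Set.toFinset_ofPred]; exact quadraticChar_card_sqrts hF _
    _ = Fintype.card F + ∑ x, quadraticChar F (f x) := by
        rw [sum_add_distrib, sum_const, card_univ, nsmul_one, add_comm]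

theorem quadraticChar_prod_prod_erase_sub (S : Finset F) :
    quadraticChar F (∏ b ∈ S, ∏ c ∈ S.erase b, (c - b)) = quadraticChar F (-1) ^ (#S).choose 2 := by
  simp only [map_prod]
  refine prod_prod_erase_eq_pow_choose_two S _ _ fun b _ c _ hbc => ?_
  rw [← map_mul, show (c - b) * (b - c) = -1 * (c - b) ^ 2 by ring, map_mul,
    quadraticChar_sq_one' (sub_ne_zero.mpr hbc.symm), mul_one]

theorem prod_compl_quadraticChar_prod_sub (S : Finset F) :
    ∏ x ∈ Sᶜ, quadraticChar F (∏ b ∈ S, (x - b)) = quadraticChar F (-1) ^ (#S + 1).choose 2 := by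
  have key := congrArg (quadraticChar F) (prod_compl_prod_sub_mul_prod_prod_erase_sub S)
  rw [map_mul, map_prod, quadraticChar_prod_prod_erase_sub, map_pow] at key
  have hsq : quadraticChar F (-1) ^ 2 = 1 := by rw [← map_pow, neg_one_sq, map_one]
  rw [Nat.choose_succ_succ', Nat.choose_one_right, pow_add, ← key, mul_assoc, ← pow_add,
    ← two_mul, pow_mul, hsq, one_pow, mul_one]

theorem card_sq_eq_prod_sub_modEq (hF : ringChar F ≠ 2) (S : Finset F) :
    (#{P : F × F | P.2 ^ 2 = ∏ b ∈ S, (P.1 - b)} : ℤ) ≡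
      2 * Fintype.card F - #S - 1 + quadraticChar F (-1) ^ (#S + 1).choose 2 [ZMOD 4] := by
  have hS : ∑ x, quadraticChar F (∏ b ∈ S, (x - b)) =
      ∑ x ∈ Sᶜ, quadraticChar F (∏ b ∈ S, (x - b)) := by
    refine (sum_subset (subset_univ _) fun x _ hx => ?_).symm
    rw [notMem_compl] at hx
    rw [prod_eq_zero hx (sub_self x), quadraticChar_zero]
  have hsign : ∀ x ∈ Sᶜ, quadraticChar F (∏ b ∈ S, (x - b)) = 1 ∨
      quadraticChar F (∏ b ∈ S, (x - b)) = -1 := fun x hx =>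
    quadraticChar_dichotomy <| prod_ne_zero_iff.mpr fun b hb =>
      sub_ne_zero.mpr fun h => mem_compl.mp hx (h ▸ hb)
  have hcard : (#Sᶜ : ℤ) = Fintype.card F - #S := by
    rw [card_compl, Nat.cast_sub (card_le_univ S)]
  rw [card_sq_eq_eq_card_add_sum_quadraticChar F hF fun x => ∏ b ∈ S, (x - b), hS]
  calc _ ≡ Fintype.card F + (#Sᶜ - 1 + ∏ x ∈ Sᶜ, quadraticChar F (∏ b ∈ S, (x - b))) [ZMOD 4] :=
        Int.ModEq.add_left _ (Int.sum_modEq_card_sub_one_add_prod _ _ hsign)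
    _ = _ := by rw [hcard, prod_compl_quadraticChar_prod_sub]; ring

end

theorem stmt7_general (p : ℕ) [Fact p.Prime] (hp : p % 4 = 3) (S : Finset (ZMod p)) :
    (Even S.card →
      ((Finset.univ : Finset (ZMod p × ZMod p)).filter
        (fun P => P.2 ^ 2 = ∏ b ∈ S, (P.1 - b))).card % 4 = 2) ∧
    (Odd S.card →
      ((Finset.univ : Finset (ZMod p × ZMod p)).filter
        (fun P => P.2 ^ 2 = ∏ b ∈ S, (P.1 - b))).card % 4 = 3) := by
  have hF : ringChar (ZMod p) ≠ 2 := by rw [ZMod.ringChar_zmod_n]; omega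
  have h := card_sq_eq_prod_sub_modEq hF S
  rw [quadraticChar_neg_one hF, ZMod.card, ZMod.χ₄_nat_three_mod_four hp,
    Int.neg_one_pow_choose_two] at h
  unfold Int.ModEq at h
  constructor <;> rintro ⟨k, hk⟩ <;> split_ifs at h <;> omega

theorem stmt7 (p : ℕ) [Fact p.Prime] (hp : p % 4 = 3) (S : Finset (ZMod p)) (hS : S.Nonempty) :
    (Even S.card →
      ((Finset.univ : Finset (ZMod p × ZMod p)).filter
        (fun P => P.2 ^ 2 = ∏ b ∈ S, (P.1 - b))).card % 4 = 2) ∧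
    (Odd S.card →
      ((Finset.univ : Finset (ZMod p × ZMod p)).filter
        (fun P => P.2 ^ 2 = ∏ b ∈ S, (P.1 - b))).card % 4 = 3) :=
  stmt7_general p hp S
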